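/- Let G be a group with elements a_1, ..., a_{g-1}, u_1, ..., u_{g-1} satisfying the braid relations within each family, a_i u_j = u_j a_i for |i-j|>1, a_i u_{i+1} u_i = u_{i+1} u_i a_{i+1}, a_{i+1} u_i u_{i+1} = u_i u_{i+1} a_i, a_1 u_1 a_1 = u_1, and u_2 a_1 a_2 u_1 = a_1 a_2. Set r = a_1 a_2 ⋯ a_{g-1} u_{g-1} ⋯ u_2 u_1 and let Δ_g be the fundamental element of the u_i's (Δ_1 = 1, Δ_m = (u_1 ⋯ u_{m-1}) Δ_{m-1}). Then r² = Δ_g². -/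

import Mathlib

variable {G : Type*} [Group G]

/-- `prodAsc f m = f 1 * f 2 * ⋯ * f m` (empty product for `m = 0`). -/
def prodAsc (f : ℕ → G) (m : ℕ) : G :=
  ((List.range m).map (fun i => f (i + 1))).prod

/-- `prodDesc f m = f m * ⋯ * f 2 * f 1` (empty product for `m = 0`). -/
def prodDesc (f : ℕ → G) (m : ℕ) : G :=
  (((List.range m).reverse).map (fun i => f (i + 1))).prod

/-- The fundamental braid element: `Δ 0 = Δ 1 = 1`, `Δ (m+1) = (u 1 ⋯ u m) * Δ m`. -/
def braidDelta (u : ℕ → G) : ℕ → G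
  | 0 => 1
  | m + 1 => prodAsc u m * braidDelta u m

/-!
Write `n = g - 1`, `x = a₁⋯aₙ`, `z = uₙ⋯u₁`, and `Δ'` for the fundamental element of
`u₂, …, uₙ`. The braid relations give `Δₙ₊₁ = Δₙ z = z Δ'`. Conjugation by `Δₙ₊₁` sends `aⱼ`
to `aₙ₊₁₋ⱼ⁻¹`, so `x Δₙ₊₁ x = Δₙ₊₁`. Conjugation by `u₁⋯uₙ` raises every index of both
families by one, which spreads `u₂ a₁ a₂ u₁ = a₁ a₂` to `uⱼ₊₁ aⱼ aⱼ₊₁ uⱼ = aⱼ aⱼ₊₁`; hence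
`uⱼ₊₁ x uⱼ = x`, i.e. `x` conjugates `Δₙ⁻¹` to `Δ'`. Then
`x z x = x Δₙ₊₁ Δ'⁻¹ x = x Δₙ₊₁ x Δₙ = Δₙ₊₁ Δₙ`, and `(x z)² = Δₙ₊₁ Δₙ z = Δₙ₊₁²`.
-/

section Products

variable (f : ℕ → G) (m : ℕ)

@[simp] theorem prodAsc_zero : prodAsc f 0 = 1 := rfl

@[simp] theorem prodAsc_succ : prodAsc f (m + 1) = prodAsc f m * f (m + 1) := by
  simp [prodAsc, List.range_succ]

@[simp] theorem prodDesc_zero : prodDesc f 0 = 1 := rfl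

@[simp] theorem prodDesc_succ : prodDesc f (m + 1) = f (m + 1) * prodDesc f m := by
  simp [prodDesc, List.range_succ]

@[simp] theorem braidDelta_zero : braidDelta f 0 = 1 := rfl

theorem braidDelta_succ : braidDelta f (m + 1) = prodAsc f m * braidDelta f m := rfl

theorem prodAsc_succ' : prodAsc f (m + 1) = f 1 * prodAsc (fun i => f (i + 1)) m := by
  induction m with
  | zero => simp
  | succ m ih => rw [prodAsc_succ, ih, prodAsc_succ, mul_assoc]

theorem prodDesc_succ' : prodDesc f (m + 1) = prodDesc (fun i => f (i + 1)) m * f 1 := by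
  induction m with
  | zero => simp
  | succ m ih => rw [prodDesc_succ, ih, prodDesc_succ, mul_assoc]

theorem prodAsc_inv : prodAsc (fun i => (f i)⁻¹) m = (prodDesc f m)⁻¹ := by
  induction m with
  | zero => simp
  | succ m ih => simp [ih]

theorem prodDesc_reverse : prodDesc (fun i => f (m + 1 - i)) m = prodAsc f m := by
  induction m with
  | zero => rfl
  | succ m ih =>
    rw [prodDesc_succ', prodAsc_succ, ← ih]
    congr 2
    funext i; congr 1; omega

end Products

section Semiconj

variable {f f' : ℕ → G} {c p q : G} {m : ℕ}

theorem SemiconjBy.prodAsc_right (h : ∀ i, 1 ≤ i → i ≤ m → SemiconjBy c (f i) (f' i)) :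
    SemiconjBy c (prodAsc f m) (prodAsc f' m) := by
  induction m with
  | zero => exact SemiconjBy.one_right c
  | succ m ih =>
    simpa using (ih fun i hi him => h i hi (by omega)).mul_right (h (m + 1) (by omega) le_rfl)

theorem SemiconjBy.prodDesc_right (h : ∀ i, 1 ≤ i → i ≤ m → SemiconjBy c (f i) (f' i)) :
    SemiconjBy c (prodDesc f m) (prodDesc f' m) := by
  induction m with
  | zero => exact SemiconjBy.one_right c
  | succ m ih =>
    simpa using (h (m + 1) (by omega) le_rfl).mul_right (ih fun i hi him => h i hi (by omega))

theorem SemiconjBy.braidDelta_right (h : ∀ i, 1 ≤ i → i < m → SemiconjBy c (f i) (f' i)) :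
    SemiconjBy c (braidDelta f m) (braidDelta f' m) := by
  induction m with
  | zero => exact SemiconjBy.one_right c
  | succ m ih =>
    exact (SemiconjBy.prodAsc_right fun i hi him => h i hi (by omega)).mul_right
      (ih fun i hi him => h i hi (by omega))

theorem semiconjBy_prodAsc_of_adjacent {k : ℕ} (hkm : k + 2 ≤ m)
    (hpair : SemiconjBy (f (k + 1) * f (k + 2)) p q)
    (hbelow : ∀ i, 1 ≤ i → i ≤ k → Commute (f i) q)
    (habove : ∀ i, k + 3 ≤ i → i ≤ m → Commute (f i) p) :
    SemiconjBy (prodAsc f m) p q := by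
  induction m, hkm using Nat.le_induction with
  | base =>
    rw [prodAsc_succ, prodAsc_succ, mul_assoc]
    have hq : Commute q (prodAsc f k) :=
      SemiconjBy.prodAsc_right fun i hi hik => (hbelow i hi hik).symm
    exact SemiconjBy.mul_left hq.symm hpair
  | succ m hkm ih =>
    rw [prodAsc_succ]
    exact (ih fun i hi him => habove i hi (by omega)).mul_left (habove (m + 1) (by omega) le_rfl)

end Semiconj

section Braid

def FarCommute (u : ℕ → G) (n : ℕ) : Prop :=
  ∀ i j, 1 ≤ i → i + 2 ≤ j → j ≤ n → Commute (u i) (u j)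

def BraidRelations (u : ℕ → G) (n : ℕ) : Prop :=
  ∀ i, 1 ≤ i → i + 1 ≤ n → u i * u (i + 1) * u i = u (i + 1) * u i * u (i + 1)

variable {u : ℕ → G} {n m : ℕ}

theorem braidDelta_succ_eq_mul_prodDesc (hfar : FarCommute u n) (hm : m ≤ n) :
    braidDelta u (m + 1) = braidDelta u m * prodDesc u m := by
  induction m with
  | zero => simp [braidDelta_succ]
  | succ m ih =>
    have hcomm : Commute (u (m + 1)) (braidDelta u m) :=
      SemiconjBy.braidDelta_right fun i hi him => (hfar i (m + 1) hi (by omega) hm).symm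
    calc braidDelta u (m + 2) = prodAsc u m * u (m + 1) * (braidDelta u m * prodDesc u m) := by
          rw [braidDelta_succ, prodAsc_succ, ih (by omega)]
      _ = prodAsc u m * braidDelta u m * (u (m + 1) * prodDesc u m) := by
          simp only [mul_assoc, hcomm.left_comm]
      _ = braidDelta u (m + 1) * prodDesc u (m + 1) := by rw [braidDelta_succ, prodDesc_succ]

theorem semiconjBy_prodAsc_u (hfar : FarCommute u n) (hbraid : BraidRelations u n) {i : ℕ}
    (hi : 1 ≤ i) (him : i + 1 ≤ m) (hmn : m ≤ n) :
    SemiconjBy (prodAsc u m) (u i) (u (i + 1)) := by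
  obtain ⟨k, rfl⟩ : ∃ k, i = k + 1 := ⟨i - 1, by omega⟩
  refine semiconjBy_prodAsc_of_adjacent him ?_ (fun j hj hjk => ?_) (fun j hj hjm => ?_)
  · simpa only [SemiconjBy, mul_assoc] using hbraid (k + 1) hi (by omega)
  · exact hfar j (k + 2) hj (by omega) (by omega)
  · exact (hfar (k + 1) j hi (by omega) (by omega)).symm

theorem braidDelta_succ_eq_prodDesc_mul (hfar : FarCommute u n) (hbraid : BraidRelations u n)
    (hm : m ≤ n) : braidDelta u (m + 1) = prodDesc u m * braidDelta (fun i => u (i + 1)) m := by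
  induction m with
  | zero => simp [braidDelta_succ]
  | succ m ih =>
    have hpull :
        SemiconjBy (prodAsc u (m + 1)) (prodDesc u m) (prodDesc (fun i => u (i + 1)) m) :=
      SemiconjBy.prodDesc_right fun i hi him => semiconjBy_prodAsc_u hfar hbraid hi (by omega) hm
    calc braidDelta u (m + 2)
        = prodAsc u (m + 1) * prodDesc u m * braidDelta (fun i => u (i + 1)) m := by
          rw [braidDelta_succ, ih (by omega), mul_assoc]
      _ = prodDesc (fun i => u (i + 1)) m * u 1 *
            (prodAsc (fun i => u (i + 1)) m * braidDelta (fun i => u (i + 1)) m) := by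
          rw [hpull.eq, prodAsc_succ']; group
      _ = prodDesc u (m + 1) * braidDelta (fun i => u (i + 1)) (m + 1) := by
          rw [prodDesc_succ', braidDelta_succ]

theorem braidDelta_inv (hfar : FarCommute u n) (hm : m ≤ n + 1) :
    braidDelta (fun i => (u i)⁻¹) m = (braidDelta u m)⁻¹ := by
  induction m with
  | zero => simp
  | succ m ih =>
    rw [braidDelta_succ, ih (by omega), prodAsc_inv,
      braidDelta_succ_eq_mul_prodDesc hfar (by omega), mul_inv_rev]

end Braid

section Mixed

-- Relations (C1)–(C3) of the presentation, for generators indexed by `1, …, n`.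
def RelC1 (a u : ℕ → G) (n : ℕ) : Prop :=
  ∀ i j, 1 ≤ i → i ≤ n → 1 ≤ j → j ≤ n → (i + 2 ≤ j ∨ j + 2 ≤ i) → Commute (a i) (u j)

def RelC2 (a u : ℕ → G) (n : ℕ) : Prop :=
  ∀ i, 1 ≤ i → i + 1 ≤ n → a i * u (i + 1) * u i = u (i + 1) * u i * a (i + 1)

def RelC3 (a u : ℕ → G) (n : ℕ) : Prop :=
  ∀ i, 1 ≤ i → i + 1 ≤ n → a (i + 1) * u i * u (i + 1) = u i * u (i + 1) * a i

variable {a u : ℕ → G} {n m : ℕ}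

theorem semiconjBy_prodAsc_a (hC1 : RelC1 a u n) (hC3 : RelC3 a u n) {k : ℕ}
    (hk : 1 ≤ k) (hkm : k + 1 ≤ m) (hmn : m ≤ n) :
    SemiconjBy (prodAsc u m) (a k) (a (k + 1)) := by
  obtain ⟨k, rfl⟩ : ∃ j, k = j + 1 := ⟨k - 1, by omega⟩
  refine semiconjBy_prodAsc_of_adjacent hkm ?_ (fun j hj hjk => ?_) (fun j hj hjm => ?_)
  · simpa only [SemiconjBy, mul_assoc] using (hC3 (k + 1) hk (by omega)).symm
  · exact (hC1 (k + 2) j (by omega) (by omega) hj (by omega) (by omega)).symm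
  · exact (hC1 (k + 1) j hk (by omega) (by omega) (by omega) (by omega)).symm

theorem semiconjBy_prodDesc_a (hC1 : RelC1 a u n) (hC2 : RelC2 a u n)
    (hm : 2 ≤ m) (hmn : m ≤ n) : SemiconjBy (prodDesc u m) (a m) (a (m - 1)) := by
  obtain ⟨m, rfl⟩ : ∃ k, m = k + 2 := ⟨m - 2, by omega⟩
  have hcomm : Commute (a (m + 2)) (prodDesc u m) :=
    SemiconjBy.prodDesc_right fun i hi him =>
      hC1 (m + 2) i (by omega) hmn hi (by omega) (by omega)
  have hpair : SemiconjBy (u (m + 2) * u (m + 1)) (a (m + 2)) (a (m + 1)) := by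
    simpa only [SemiconjBy, mul_assoc] using (hC2 (m + 1) (by omega) hmn).symm
  rw [prodDesc_succ, prodDesc_succ, ← mul_assoc]
  exact hpair.mul_left hcomm.symm

theorem semiconjBy_braidDelta_a (hfar : FarCommute u n) (hC1 : RelC1 a u n) (hC2 : RelC2 a u n)
    (hC3 : RelC3 a u n) (hC4 : a 1 * u 1 * a 1 = u 1) {j : ℕ}
    (hj : 1 ≤ j) (hjm : j < m) (hmn : m ≤ n + 1) :
    SemiconjBy (braidDelta u m) (a j) (a (m - j))⁻¹ := by
  induction m, (show 2 ≤ m by omega) using Nat.le_induction generalizing j with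
  | base =>
    obtain rfl : j = 1 := by omega
    have hΔ : braidDelta u 2 = u 1 := by simp [braidDelta_succ]
    rw [hΔ, SemiconjBy, eq_inv_mul_iff_mul_eq, ← mul_assoc, hC4]
  | succ m hm ih =>
    rcases Nat.lt_or_ge j m with hjm' | hjm'
    · rw [braidDelta_succ, show m + 1 - j = m - j + 1 by omega]
      exact (semiconjBy_prodAsc_a hC1 hC3 (by omega) (by omega) (by omega)).inv_right.mul_left
        (ih hj hjm' (by omega))
    · obtain rfl : j = m := by omega
      have h := ih (j := j - 1) (by omega) (by omega) (by omega)
      rw [show j - (j - 1) = 1 by omega] at h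
      rw [braidDelta_succ_eq_mul_prodDesc hfar (by omega), Nat.add_sub_cancel_left]
      exact h.mul_left (semiconjBy_prodDesc_a hC1 hC2 hm (by omega))

theorem prodAsc_mul_braidDelta_mul_prodAsc (hfar : FarCommute u n) (hC1 : RelC1 a u n)
    (hC2 : RelC2 a u n) (hC3 : RelC3 a u n) (hC4 : a 1 * u 1 * a 1 = u 1) :
    prodAsc a n * braidDelta u (n + 1) * prodAsc a n = braidDelta u (n + 1) := by
  have h : SemiconjBy (braidDelta u (n + 1)) (prodAsc a n) (prodAsc a n)⁻¹ := by
    have hrev : (prodAsc a n)⁻¹ = prodAsc (fun j => (a (n + 1 - j))⁻¹) n := by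
      rw [prodAsc_inv, prodDesc_reverse]
    rw [hrev]
    exact SemiconjBy.prodAsc_right fun j hj hjn =>
      semiconjBy_braidDelta_a hfar hC1 hC2 hC3 hC4 hj (Nat.lt_succ_of_le hjn) le_rfl
  rw [mul_assoc, h.eq]; group

end Mixed

section Relation

variable {a u : ℕ → G} {n : ℕ}

theorem rel_C5_shift (hfar : FarCommute u n) (hbraid : BraidRelations u n) (hC1 : RelC1 a u n)
    (hC3 : RelC3 a u n) (hC5 : u 2 * a 1 * a 2 * u 1 = a 1 * a 2) {j : ℕ}
    (hj : 1 ≤ j) (hjn : j + 1 ≤ n) :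
    u (j + 1) * a j * a (j + 1) * u j = a j * a (j + 1) := by
  induction j, hj using Nat.le_induction with
  | base => exact hC5
  | succ j hj ih =>
    have hu : ∀ i, 1 ≤ i → i + 1 ≤ n → SemiconjBy (prodAsc u n) (u i) (u (i + 1)) :=
      fun i hi hin => semiconjBy_prodAsc_u hfar hbraid hi hin le_rfl
    have ha : ∀ i, 1 ≤ i → i + 1 ≤ n → SemiconjBy (prodAsc u n) (a i) (a (i + 1)) :=
      fun i hi hin => semiconjBy_prodAsc_a hC1 hC3 hi hin le_rfl
    have hlhs := ((((hu (j + 1) (by omega) hjn).mul_right (ha j hj (by omega))).mul_right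
      (ha (j + 1) (by omega) hjn)).mul_right (hu j hj (by omega)))
    have hrhs := (ha j hj (by omega)).mul_right (ha (j + 1) (by omega) hjn)
    rw [ih (by omega)] at hlhs
    exact mul_right_cancel (hlhs.eq.symm.trans hrhs.eq)

theorem semiconjBy_prodAsc_a_u (hfar : FarCommute u n) (hbraid : BraidRelations u n)
    (hC1 : RelC1 a u n) (hC3 : RelC3 a u n) (hC5 : u 2 * a 1 * a 2 * u 1 = a 1 * a 2)
    {j m : ℕ} (hj : 1 ≤ j) (hjm : j + 1 ≤ m) (hmn : m ≤ n) :
    SemiconjBy (prodAsc a m) (u j)⁻¹ (u (j + 1)) := by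
  obtain ⟨k, rfl⟩ : ∃ k, j = k + 1 := ⟨j - 1, by omega⟩
  refine semiconjBy_prodAsc_of_adjacent hjm ?_ (fun i hi hik => ?_) (fun i hi him => ?_)
  · rw [SemiconjBy, mul_inv_eq_iff_eq_mul]
    simpa only [mul_assoc] using (rel_C5_shift hfar hbraid hC1 hC3 hC5 hj (by omega)).symm
  · exact hC1 i (k + 2) hi (by omega) (by omega) (by omega) (by omega)
  · exact (hC1 i (k + 1) (by omega) (by omega) hj (by omega) (by omega)).inv_right

theorem semiconjBy_prodAsc_braidDelta (hfar : FarCommute u n) (hbraid : BraidRelations u n)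
    (hC1 : RelC1 a u n) (hC3 : RelC3 a u n) (hC5 : u 2 * a 1 * a 2 * u 1 = a 1 * a 2) :
    SemiconjBy (prodAsc a n) (braidDelta u n)⁻¹ (braidDelta (fun i => u (i + 1)) n) := by
  rw [← braidDelta_inv hfar (Nat.le_succ n)]
  exact SemiconjBy.braidDelta_right fun i hi hin =>
    semiconjBy_prodAsc_a_u hfar hbraid hC1 hC3 hC5 hi hin le_rfl

theorem prodAsc_mul_prodDesc_mul_prodAsc (hfar : FarCommute u n) (hbraid : BraidRelations u n)
    (hC1 : RelC1 a u n) (hC2 : RelC2 a u n) (hC3 : RelC3 a u n) (hC4 : a 1 * u 1 * a 1 = u 1)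
    (hC5 : u 2 * a 1 * a 2 * u 1 = a 1 * a 2) :
    prodAsc a n * prodDesc u n * prodAsc a n = braidDelta u (n + 1) * braidDelta u n := by
  have hz : prodDesc u n = braidDelta u (n + 1) * (braidDelta (fun i => u (i + 1)) n)⁻¹ := by
    rw [braidDelta_succ_eq_prodDesc_mul hfar hbraid le_rfl]; group
  have hx : SemiconjBy (prodAsc a n) (braidDelta u n) (braidDelta (fun i => u (i + 1)) n)⁻¹ := by
    simpa using (semiconjBy_prodAsc_braidDelta hfar hbraid hC1 hC3 hC5).inv_right
  calc prodAsc a n * prodDesc u n * prodAsc a n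
      = prodAsc a n * braidDelta u (n + 1) *
          ((braidDelta (fun i => u (i + 1)) n)⁻¹ * prodAsc a n) := by rw [hz]; group
    _ = prodAsc a n * braidDelta u (n + 1) * prodAsc a n * braidDelta u n := by
          rw [← hx.eq]; group
    _ = braidDelta u (n + 1) * braidDelta u n := by
          rw [prodAsc_mul_braidDelta_mul_prodAsc hfar hC1 hC2 hC3 hC4]

end Relation

theorem rel_E2_general (g : ℕ) (a u : ℕ → G)
    (hu1 : ∀ i j, 1 ≤ i → i + 2 ≤ j → j ≤ g - 1 → u i * u j = u j * u i)
    (hu2 : ∀ i, 1 ≤ i → i + 1 ≤ g - 1 → u i * u (i + 1) * u i = u (i + 1) * u i * u (i + 1))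
    (hC1 : ∀ i j, 1 ≤ i → i ≤ g - 1 → 1 ≤ j → j ≤ g - 1 → (i + 2 ≤ j ∨ j + 2 ≤ i) →
      a i * u j = u j * a i)
    (hC2 : ∀ i, 1 ≤ i → i ≤ g - 2 → a i * u (i + 1) * u i = u (i + 1) * u i * a (i + 1))
    (hC3 : ∀ i, 1 ≤ i → i ≤ g - 2 → a (i + 1) * u i * u (i + 1) = u i * u (i + 1) * a i)
    (hC4 : a 1 * u 1 * a 1 = u 1)
    (hC5 : u 2 * a 1 * a 2 * u 1 = a 1 * a 2)
    :
    (prodAsc a (g - 1) * prodDesc u (g - 1)) ^ 2 = (braidDelta u g) ^ 2 := by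
  rcases g with _ | n
  · simp
  simp only [Nat.add_sub_cancel] at hu1 hu2 hC1 ⊢
  have hfar : FarCommute u n := hu1
  have hxzx := prodAsc_mul_prodDesc_mul_prodAsc hfar hu2 hC1
    (fun i hi hin => hC2 i hi (by omega)) (fun i hi hin => hC3 i hi (by omega)) hC4 hC5
  calc (prodAsc a n * prodDesc u n) ^ 2
      = prodAsc a n * prodDesc u n * prodAsc a n * prodDesc u n := by rw [sq, ← mul_assoc]
    _ = braidDelta u (n + 1) * (braidDelta u n * prodDesc u n) := by rw [hxzx, mul_assoc]
    _ = braidDelta u (n + 1) ^ 2 := by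
          rw [← braidDelta_succ_eq_mul_prodDesc hfar le_rfl, sq]

/-- relation (E2): r² = Δ_g² for r = a_1 ⋯ a_{g-1} u_{g-1} ⋯ u_1. -/
theorem rel_E2 (g : ℕ) (a u : ℕ → G)
    (ha1 : ∀ i j, 1 ≤ i → i + 2 ≤ j → j ≤ g - 1 → a i * a j = a j * a i)
    (ha2 : ∀ i, 1 ≤ i → i + 1 ≤ g - 1 → a i * a (i + 1) * a i = a (i + 1) * a i * a (i + 1))
    (hu1 : ∀ i j, 1 ≤ i → i + 2 ≤ j → j ≤ g - 1 → u i * u j = u j * u i)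
    (hu2 : ∀ i, 1 ≤ i → i + 1 ≤ g - 1 → u i * u (i + 1) * u i = u (i + 1) * u i * u (i + 1))
    (hC1 : ∀ i j, 1 ≤ i → i ≤ g - 1 → 1 ≤ j → j ≤ g - 1 → (i + 2 ≤ j ∨ j + 2 ≤ i) →
      a i * u j = u j * a i)
    (hC2 : ∀ i, 1 ≤ i → i ≤ g - 2 → a i * u (i + 1) * u i = u (i + 1) * u i * a (i + 1))
    (hC3 : ∀ i, 1 ≤ i → i ≤ g - 2 → a (i + 1) * u i * u (i + 1) = u i * u (i + 1) * a i)
    (hC4 : a 1 * u 1 * a 1 = u 1)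
    (hC5 : u 2 * a 1 * a 2 * u 1 = a 1 * a 2)
    :
    (prodAsc a (g - 1) * prodDesc u (g - 1)) ^ 2 = (braidDelta u g) ^ 2 :=
  rel_E2_general g a u hu1 hu2 hC1 hC2 hC3 hC4 hC5
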